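/- Let Ω ⊆ ℝ² be an open, connected, simply connected set and let u, v : ℝ² → ℝ be continuously differentiable on Ω with ∂u/∂x + ∂v/∂y = 0 on Ω (the flow is incompressible). Then there exists a stream function ψ : Ω → ℝ, twice continuously differentiable on Ω, such that ∂ψ/∂y = u and ∂ψ/∂x = −v on Ω. -/

import Mathlib

/-- Partial derivative in the x-direction of a function on ℝ². -/
noncomputable def pdx (f : ℝ × ℝ → ℝ) (z : ℝ × ℝ) : ℝ := fderiv ℝ f z (1, 0)

/-- Partial derivative in the y-direction of a function on ℝ². -/
noncomputable def pdy (f : ℝ × ℝ → ℝ) (z : ℝ × ℝ) : ℝ := fderiv ℝ f z (0, 1)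

open Metric Set intervalIntegral

set_option maxHeartbeats 1000000

noncomputable section StreamAux

variable {u v : ℝ × ℝ → ℝ}

variable (u v) in
/-- The candidate derivative of a stream function. -/
def lmap (z : ℝ × ℝ) : ℝ × ℝ →L[ℝ] ℝ :=
  (-(v z)) • (ContinuousLinearMap.fst ℝ ℝ ℝ) + (u z) • (ContinuousLinearMap.snd ℝ ℝ ℝ)

lemma lmap_apply (z : ℝ × ℝ) (w : ℝ × ℝ) : lmap u v z w = -(v z) * w.1 + u z * w.2 := by
  simp [lmap]

variable (u v) in
/-- `ψ` is a local primitive (stream function) on `W`. -/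
def IsPrim (ψ : ℝ × ℝ → ℝ) (W : Set (ℝ × ℝ)) : Prop :=
  ∀ z ∈ W, HasFDerivAt ψ (lmap u v z) z

lemma hasDerivAt_fst {f : ℝ × ℝ → ℝ} {a b : ℝ} (hd : DifferentiableAt ℝ f (a, b)) :
    HasDerivAt (fun t => f (t, b)) (fderiv ℝ f (a, b) (1, 0)) a :=
  hd.hasFDerivAt.comp_hasDerivAt a ((hasDerivAt_id a).prodMk (hasDerivAt_const a b))

lemma hasDerivAt_snd {f : ℝ × ℝ → ℝ} {a b : ℝ} (hd : DifferentiableAt ℝ f (a, b)) :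
    HasDerivAt (fun s => f (a, s)) (fderiv ℝ f (a, b) (0, 1)) b :=
  hd.hasFDerivAt.comp_hasDerivAt b ((hasDerivAt_const b a).prodMk (hasDerivAt_id b))

lemma const_of_hasDerivAt_zero {s : Set ℝ} (hs : Convex ℝ s) (ho : IsOpen s) {g : ℝ → ℝ}
    (hg : ∀ w ∈ s, HasDerivAt g 0 w) {a b : ℝ} (ha : a ∈ s) (hb : b ∈ s) : g a = g b := by
  refine hs.is_const_of_fderivWithin_eq_zero
    (fun w hw => ((hg w hw).differentiableAt).differentiableWithinAt) (fun w hw => ?_) ha hb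
  rw [fderivWithin_of_isOpen ho hw, (hg w hw).hasFDerivAt.fderiv]
  ext
  simp

lemma abs_sub_le_of_mem_uIoc {a b t : ℝ} (ht : t ∈ Set.uIoc a b) : |t - a| ≤ |b - a| := by
  rcases Set.mem_uIoc.1 ht with ⟨h1, h2⟩ | ⟨h1, h2⟩
  · rw [abs_of_nonneg (by linarith)]
    have := le_abs_self (b - a); linarith
  · rw [abs_of_nonpos (by linarith)]
    have := neg_abs_le (b - a); linarith

section Local

variable {Ω : Set (ℝ × ℝ)} (hΩ : IsOpen Ω) (hu : ContDiffOn ℝ 1 u Ω) (hv : ContDiffOn ℝ 1 v Ω)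
  (hinc : ∀ z ∈ Ω, fderiv ℝ u z (1, 0) + fderiv ℝ v z (0, 1) = 0)

include hΩ hu hv hinc in
lemma exists_local_prim {c : ℝ × ℝ} (hc : c ∈ Ω) :
    ∃ r > 0, ball c r ⊆ Ω ∧ ∃ ψ : ℝ × ℝ → ℝ, IsPrim u v ψ (ball c r) := by
  -- basic continuity facts
  have hcu : ContinuousOn u Ω := hu.continuousOn
  have hcv : ContinuousOn v Ω := hv.continuousOn
  have hdu : ∀ z ∈ Ω, DifferentiableAt ℝ u z := fun z hz =>
    (hu.differentiableOn one_ne_zero).differentiableAt (hΩ.mem_nhds hz)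
  have hdv : ∀ z ∈ Ω, DifferentiableAt ℝ v z := fun z hz =>
    (hv.differentiableOn one_ne_zero).differentiableAt (hΩ.mem_nhds hz)
  have hfv : ContinuousOn (fun z => fderiv ℝ v z) Ω :=
    hv.continuousOn_fderiv_of_isOpen hΩ le_rfl
  have hfu : ContinuousOn (fun z => fderiv ℝ u z) Ω :=
    hu.continuousOn_fderiv_of_isOpen hΩ le_rfl
  -- choose a closed ball inside Ω
  obtain ⟨r, hr0, hrΩ⟩ : ∃ r > 0, closedBall c r ⊆ Ω := by
    rcases Metric.isOpen_iff.1 hΩ c hc with ⟨ε, hε, hball⟩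
    exact ⟨ε / 2, half_pos hε, (closedBall_subset_ball (half_lt_self hε)).trans hball⟩
  have hballΩ : ball c r ⊆ Ω := (ball_subset_closedBall).trans hrΩ
  -- membership helper
  have hmem : ∀ {t s : ℝ}, t ∈ closedBall c.1 r → s ∈ closedBall c.2 r → (t, s) ∈ Ω := by
    intro t s ht hs
    apply hrΩ
    rw [← closedBall_prod_same]
    exact ⟨ht, hs⟩
  have hmemb : ∀ {z : ℝ × ℝ}, z ∈ ball c r → z.1 ∈ ball c.1 r ∧ z.2 ∈ ball c.2 r := by
    intro z hz
    rwa [← ball_prod_same, mem_prod] at hz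
  have huIcc : ∀ {a b : ℝ}, a ∈ ball c.1 r → b ∈ ball c.1 r → uIcc a b ⊆ closedBall c.1 r :=
    fun ha hb => (convex_closedBall _ _).ordConnected.uIcc_subset
      (ball_subset_closedBall ha) (ball_subset_closedBall hb)
  have huIcc2 : ∀ {a b : ℝ}, a ∈ ball c.2 r → b ∈ ball c.2 r → uIcc a b ⊆ closedBall c.2 r :=
    fun ha hb => (convex_closedBall _ _).ordConnected.uIcc_subset
      (ball_subset_closedBall ha) (ball_subset_closedBall hb)
  have hc1 : c.1 ∈ ball c.1 r := mem_ball_self hr0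
  have hc2 : c.2 ∈ ball c.2 r := mem_ball_self hr0
  -- continuity of slices
  have hslicev : ∀ {b : ℝ}, b ∈ closedBall c.2 r → ContinuousOn (fun t => v (t, b)) (closedBall c.1 r) := by
    intro b hb
    exact hcv.comp (Continuous.continuousOn (Continuous.prodMk_left b)) (fun t ht => hmem ht hb)
  have hsliceu : ∀ {a : ℝ}, a ∈ closedBall c.1 r → ContinuousOn (fun s => u (a, s)) (closedBall c.2 r) := by
    intro a ha
    exact hcu.comp (Continuous.continuousOn (Continuous.prodMk_right a)) (fun s hs => hmem ha hs)
  -- integrability of slices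
  have hintv : ∀ {a b w : ℝ}, a ∈ ball c.1 r → b ∈ ball c.1 r → w ∈ closedBall c.2 r →
      IntervalIntegrable (fun t => v (t, w)) MeasureTheory.volume a b := by
    intro a b w ha hb hw
    exact ((hslicev hw).mono (huIcc ha hb)).intervalIntegrable
  have hintu : ∀ {a b w : ℝ}, a ∈ ball c.2 r → b ∈ ball c.2 r → w ∈ closedBall c.1 r →
      IntervalIntegrable (fun s => u (w, s)) MeasureTheory.volume a b := by
    intro a b w ha hb hw
    exact ((hsliceu hw).mono (huIcc2 ha hb)).intervalIntegrable
  set ψ : ℝ × ℝ → ℝ := fun z => (∫ t in c.1..z.1, -v (t, c.2)) + ∫ s in c.2..z.2, u (z.1, s)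
    with hψdef
  -- the second form of ψ, obtained from Green's theorem / incompressibility
  have hBform : ∀ z ∈ ball c r, ψ z = (∫ s in c.2..z.2, u (c.1, s)) + ∫ t in c.1..z.1, -v (t, z.2) := by
    rintro ⟨x, y⟩ hz
    obtain ⟨hx, hy⟩ := hmemb hz
    set g : ℝ → ℝ := fun w => ((∫ t in c.1..x, -v (t, c.2)) + ∫ s in c.2..w, u (x, s))
        - (∫ s in c.2..w, u (c.1, s)) - ∫ t in c.1..x, -v (t, w) with hgdef
    have key : ∀ w ∈ ball c.2 r, HasDerivAt g 0 w := by
      intro w hw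
      have hw' : w ∈ closedBall c.2 r := ball_subset_closedBall hw
      have h1 : HasDerivAt (fun w => ∫ s in c.2..w, u (x, s)) (u (x, w)) w :=
        integral_hasDerivAt_right (hintu hc2 hw (ball_subset_closedBall hx))
          (ContinuousOn.stronglyMeasurableAtFilter isOpen_ball
            ((hsliceu (ball_subset_closedBall hx)).mono ball_subset_closedBall) w hw)
          (((hsliceu (ball_subset_closedBall hx)).mono ball_subset_closedBall).continuousAt
            (isOpen_ball.mem_nhds hw))
      have h2 : HasDerivAt (fun w => ∫ s in c.2..w, u (c.1, s)) (u (c.1, w)) w :=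
        integral_hasDerivAt_right (hintu hc2 hw (ball_subset_closedBall hc1))
          (ContinuousOn.stronglyMeasurableAtFilter isOpen_ball
            ((hsliceu (ball_subset_closedBall hc1)).mono ball_subset_closedBall) w hw)
          (((hsliceu (ball_subset_closedBall hc1)).mono ball_subset_closedBall).continuousAt
            (isOpen_ball.mem_nhds hw))
      have h3 : HasDerivAt (fun w => ∫ t in c.1..x, -v (t, w)) (u (x, w) - u (c.1, w)) w := by
        have hε : (0:ℝ) < r - dist w c.2 := by
          have := mem_ball.1 hw; linarith
        have hballw : ∀ p ∈ ball w (r - dist w c.2), p ∈ ball c.2 r := by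
          intro p hp
          rw [mem_ball] at hp ⊢
          have := dist_triangle p w c.2
          linarith
        obtain ⟨C, hC⟩ : ∃ C, ∀ z ∈ closedBall c r, ‖fderiv ℝ v z‖ ≤ C :=
          (isCompact_closedBall c r).exists_bound_of_continuousOn (hfv.mono hrΩ)
        have huIccx := huIcc hc1 hx
        have key2 := intervalIntegral.hasDerivAt_integral_of_dominated_loc_of_deriv_le
          (F := fun w' t => -v (t, w')) (F' := fun w' t => -(fderiv ℝ v (t, w') (0, 1)))
          (x₀ := w) (a := c.1) (b := x) (bound := fun _ => C) (μ := MeasureTheory.volume) (ball_mem_nhds w hε)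
          ?_ ((hintv hc1 hx hw').neg) ?_ ?_ ?_ ?_
        · have hval : (∫ t in c.1..x, -(fderiv ℝ v (t, w) (0, 1))) = u (x, w) - u (c.1, w) := by
            rw [integral_congr (g := fun t => fderiv ℝ u (t, w) (1, 0))
              (fun t ht => by have := hinc _ (hmem (huIccx ht) hw'); simp only; linarith)]
            refine integral_eq_sub_of_hasDerivAt
              (fun t ht => hasDerivAt_fst (hdu _ (hmem (huIccx ht) hw'))) ?_
            exact ((ContinuousLinearMap.apply ℝ ℝ ((1:ℝ), (0:ℝ))).continuous.comp_continuousOn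
              (hfu.comp (Continuous.continuousOn (Continuous.prodMk_left w))
                (fun t ht => hmem (huIccx ht) hw'))).intervalIntegrable
          rw [hval] at key2
          exact key2.2
        · filter_upwards [isOpen_ball.mem_nhds (mem_ball_self hε)] with w' hw'2
          have : ContinuousOn (fun t => -v (t, w')) (uIcc c.1 x) := by
            refine ContinuousOn.neg ?_
            exact (hslicev (ball_subset_closedBall (hballw _ hw'2))).mono huIccx
          exact (this.mono uIoc_subset_uIcc).aestronglyMeasurable measurableSet_uIoc
        · have : ContinuousOn (fun t => -(fderiv ℝ v (t, w) (0, 1))) (uIcc c.1 x) := by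
            refine ContinuousOn.neg ?_
            exact (ContinuousLinearMap.apply ℝ ℝ ((0:ℝ), (1:ℝ))).continuous.comp_continuousOn
              (hfv.comp (Continuous.continuousOn (Continuous.prodMk_left w))
                (fun t ht => hmem (huIccx ht) hw'))
          exact (this.mono uIoc_subset_uIcc).aestronglyMeasurable measurableSet_uIoc
        · refine Filter.Eventually.of_forall (fun t => fun ht => fun w' hw'2 => ?_)
          have hmem2 : (t, w') ∈ closedBall c r := by
            rw [← closedBall_prod_same]
            exact ⟨huIccx (uIoc_subset_uIcc ht), ball_subset_closedBall (hballw _ hw'2)⟩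
          calc ‖-(fderiv ℝ v (t, w') (0, 1))‖ = ‖fderiv ℝ v (t, w') (0, 1)‖ := norm_neg _
            _ ≤ ‖fderiv ℝ v (t, w')‖ * ‖((0:ℝ), (1:ℝ))‖ := ContinuousLinearMap.le_opNorm _ _
            _ ≤ C * 1 := by
                refine mul_le_mul (hC _ hmem2) ?_ (norm_nonneg _) ((norm_nonneg _).trans (hC _ hmem2))
                rw [Prod.norm_def]
                simp
            _ = C := mul_one C
        · exact intervalIntegrable_const
        · refine Filter.Eventually.of_forall (fun t => fun ht => fun w' hw'2 => ?_)
          have hmem2 : (t, w') ∈ Ω :=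
            hmem (huIccx (uIoc_subset_uIcc ht)) (ball_subset_closedBall (hballw _ hw'2))
          exact (hasDerivAt_snd (hdv _ hmem2)).neg
      have comb := ((h1.const_add (∫ t in c.1..x, -v (t, c.2))).sub h2).sub h3
      have : u (x, w) - u (c.1, w) - (u (x, w) - u (c.1, w)) = 0 := by ring
      rw [this] at comb
      exact comb
    have h0 : g c.2 = 0 := by simp [hgdef]
    have hgy : g y = 0 := by
      rw [const_of_hasDerivAt_zero (convex_ball _ _) isOpen_ball key hy hc2, h0]
    simp only [hgdef] at hgy
    simp only [hψdef]
    linarith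
  -- now the derivative
  refine ⟨r, hr0, hballΩ, ψ, ?_⟩
  intro z hz
  obtain ⟨hz1, hz2⟩ := hmemb hz
  rw [hasFDerivAt_iff_isLittleO_nhds_zero, Asymptotics.isLittleO_iff]
  intro ε hε
  -- continuity of u, v at z
  obtain ⟨δu, hδu0, hδu⟩ : ∃ δ > 0, ∀ w, dist w z < δ → |u w - u z| < ε / 2 := by
    have := Metric.continuousAt_iff.1 (hcu.continuousAt (hΩ.mem_nhds (hballΩ hz)))
    obtain ⟨δ, hδ0, hδ⟩ := this (ε / 2) (half_pos hε)
    exact ⟨δ, hδ0, fun w hw => by simpa [Real.dist_eq] using hδ hw⟩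
  obtain ⟨δv, hδv0, hδv⟩ : ∃ δ > 0, ∀ w, dist w z < δ → |v w - v z| < ε / 2 := by
    have := Metric.continuousAt_iff.1 (hcv.continuousAt (hΩ.mem_nhds (hballΩ hz)))
    obtain ⟨δ, hδ0, hδ⟩ := this (ε / 2) (half_pos hε)
    exact ⟨δ, hδ0, fun w hw => by simpa [Real.dist_eq] using hδ hw⟩
  have hδr : (0:ℝ) < r - dist z c := by have := mem_ball.1 hz; linarith
  set δ := min (min δu δv) (r - dist z c) with hδdef
  have hδ0 : 0 < δ := lt_min (lt_min hδu0 hδv0) hδr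
  rw [Metric.eventually_nhds_iff_ball]
  refine ⟨δ, hδ0, fun h hh => ?_⟩
  rw [mem_ball, dist_zero_right] at hh
  have hδu' : δ ≤ δu := (min_le_left _ _).trans (min_le_left _ _)
  have hδv' : δ ≤ δv := (min_le_left _ _).trans (min_le_right _ _)
  set z' := z + h with hz'def
  have hz'1eq : z'.1 - z.1 = h.1 := by simp [hz'def]
  have hz'2eq : z'.2 - z.2 = h.2 := by simp [hz'def]
  have hh1 : |h.1| ≤ ‖h‖ := by
    have := norm_fst_le h; rwa [Real.norm_eq_abs] at this
  have hh2 : |h.2| ≤ ‖h‖ := by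
    have := norm_snd_le h; rwa [Real.norm_eq_abs] at this
  have hz'c : z' ∈ ball c r := by
    rw [mem_ball]
    have h1 : dist z' z ≤ ‖h‖ := by
      rw [hz'def, dist_eq_norm]; simp
    have h2 : dist z' c ≤ dist z' z + dist z c := dist_triangle _ _ _
    have h3 : δ ≤ r - dist z c := min_le_right _ _
    linarith
  obtain ⟨hz'1, hz'2⟩ := hmemb hz'c
  have hm : ((z.1, z'.2) : ℝ × ℝ) ∈ ball c r := by
    rw [← ball_prod_same]; exact ⟨hz1, hz'2⟩
  have hb2' : z'.2 ∈ closedBall c.2 r := ball_subset_closedBall hz'2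
  have hb1 : z.1 ∈ closedBall c.1 r := ball_subset_closedBall hz1
  -- increment identities
  have e1 : ψ z' - ψ (z.1, z'.2) = ∫ t in z.1..z'.1, -v (t, z'.2) := by
    rw [hBform _ hz'c, hBform _ hm]
    have i1 : IntervalIntegrable (fun t => -v (t, z'.2)) MeasureTheory.volume c.1 z'.1 :=
      (hintv hc1 hz'1 hb2').neg
    have i2 : IntervalIntegrable (fun t => -v (t, z'.2)) MeasureTheory.volume c.1 z.1 :=
      (hintv hc1 hz1 hb2').neg
    have := integral_interval_sub_left i1 i2
    linarith
  have e2 : ψ (z.1, z'.2) - ψ z = ∫ s in z.2..z'.2, u (z.1, s) := by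
    simp only [hψdef]
    have := integral_interval_sub_left (hintu hc2 hz'2 hb1) (hintu hc2 hz2 hb1)
    linarith
  have e3 : (lmap u v z) h = (∫ t in z.1..z'.1, (-v z : ℝ)) + ∫ s in z.2..z'.2, (u z : ℝ) := by
    rw [lmap_apply, integral_const, integral_const, hz'1eq, hz'2eq]
    simp only [smul_eq_mul]
    ring
  have e4 : ψ (z + h) - ψ z - (lmap u v z) h
      = (∫ t in z.1..z'.1, (-v (t, z'.2) - -v z)) + ∫ s in z.2..z'.2, (u (z.1, s) - u z) := by
    have i1 : IntervalIntegrable (fun t => -v (t, z'.2)) MeasureTheory.volume z.1 z'.1 :=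
      (hintv hz1 hz'1 hb2').neg
    rw [integral_sub i1 intervalIntegrable_const,
      integral_sub (hintu hz2 hz'2 hb1) intervalIntegrable_const]
    have : ψ (z + h) = ψ z' := by rw [hz'def]
    rw [this, e3]
    linarith
  have b1 : ‖∫ t in z.1..z'.1, (-v (t, z'.2) - -v z)‖ ≤ ε / 2 * |z'.1 - z.1| := by
    apply intervalIntegral.norm_integral_le_of_norm_le_const
    intro t ht
    have htd : |t - z.1| ≤ |h.1| := hz'1eq ▸ abs_sub_le_of_mem_uIoc ht
    have hdist : dist ((t, z'.2) : ℝ × ℝ) z < δv := by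
      rw [Prod.dist_eq]
      have d1 : dist t z.1 ≤ ‖h‖ := by rw [Real.dist_eq]; exact htd.trans hh1
      have d2 : dist z'.2 z.2 ≤ ‖h‖ := by
        rw [Real.dist_eq, hz'2eq]; exact hh2
      have : max (dist t z.1) (dist z'.2 z.2) ≤ ‖h‖ := max_le d1 d2
      calc max (dist t z.1) (dist z'.2 z.2) ≤ ‖h‖ := this
        _ < δ := hh
        _ ≤ δv := hδv'
    have := hδv _ hdist
    have heq : -v (t, z'.2) - -v z = -(v (t, z'.2) - v z) := by ring
    rw [heq, Real.norm_eq_abs, abs_neg]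
    exact (le_of_lt this)
  have b2 : ‖∫ s in z.2..z'.2, (u (z.1, s) - u z)‖ ≤ ε / 2 * |z'.2 - z.2| := by
    apply intervalIntegral.norm_integral_le_of_norm_le_const
    intro s hs
    have hsd : |s - z.2| ≤ |h.2| := hz'2eq ▸ abs_sub_le_of_mem_uIoc hs
    have hdist : dist ((z.1, s) : ℝ × ℝ) z < δu := by
      rw [Prod.dist_eq]
      have d1 : dist z.1 z.1 ≤ ‖h‖ := by simp [norm_nonneg]
      have d2 : dist s z.2 ≤ ‖h‖ := by rw [Real.dist_eq]; exact hsd.trans hh2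
      have : max (dist z.1 z.1) (dist s z.2) ≤ ‖h‖ := max_le d1 d2
      calc max (dist z.1 z.1) (dist s z.2) ≤ ‖h‖ := this
        _ < δ := hh
        _ ≤ δu := hδu'
    have := hδu _ hdist
    rw [Real.norm_eq_abs]
    exact le_of_lt this
  calc ‖ψ (z + h) - ψ z - (lmap u v z) h‖
      ≤ ‖∫ t in z.1..z'.1, (-v (t, z'.2) - -v z)‖ + ‖∫ s in z.2..z'.2, (u (z.1, s) - u z)‖ := by
        rw [e4]; exact norm_add_le _ _
    _ ≤ ε / 2 * |z'.1 - z.1| + ε / 2 * |z'.2 - z.2| := add_le_add b1 b2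
    _ ≤ ε / 2 * ‖h‖ + ε / 2 * ‖h‖ := by
        rw [hz'1eq, hz'2eq]
        have he2 : 0 ≤ ε / 2 := le_of_lt (half_pos hε)
        exact add_le_add (mul_le_mul_of_nonneg_left hh1 he2) (mul_le_mul_of_nonneg_left hh2 he2)
    _ = ε * ‖h‖ := by ring

end Local

/-! ### Constancy of differences of primitives -/

lemma const_of_hasFDerivAt_zero {E : Type*} [NormedAddCommGroup E] [NormedSpace ℝ E]
    {s : Set E} (hs : Convex ℝ s) (ho : IsOpen s) {g : E → ℝ}
    (hg : ∀ w ∈ s, HasFDerivAt g (0 : E →L[ℝ] ℝ) w) {a b : E} (ha : a ∈ s) (hb : b ∈ s) :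
    g a = g b := by
  refine hs.is_const_of_fderivWithin_eq_zero
    (fun w hw => ((hg w hw).differentiableAt).differentiableWithinAt) (fun w hw => ?_) ha hb
  rw [fderivWithin_of_isOpen ho hw, (hg w hw).fderiv]

lemma IsPrim.mono {ψ : ℝ × ℝ → ℝ} {W W' : Set (ℝ × ℝ)} (h : IsPrim u v ψ W) (hsub : W' ⊆ W) :
    IsPrim u v ψ W' := fun z hz => h z (hsub hz)

lemma IsPrim.add_const {ψ : ℝ × ℝ → ℝ} {W : Set (ℝ × ℝ)} (h : IsPrim u v ψ W) (a : ℝ) :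
    IsPrim u v (fun z => ψ z + a) W := fun z hz => (h z hz).add_const a

lemma prim_sub_const {W : Set (ℝ × ℝ)} (hW : IsOpen W) {ψ₁ ψ₂ : ℝ × ℝ → ℝ}
    (h1 : IsPrim u v ψ₁ W) (h2 : IsPrim u v ψ₂ W) {S : Set (ℝ × ℝ)} (hS : IsPreconnected S)
    (hSW : S ⊆ W) {a b : ℝ × ℝ} (ha : a ∈ S) (hb : b ∈ S) :
    ψ₁ a - ψ₂ a = ψ₁ b - ψ₂ b := by
  have loc : ∀ w ∈ W, ∃ ε > 0, ∀ p ∈ ball w ε, ψ₁ p - ψ₂ p = ψ₁ w - ψ₂ w := by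
    intro w hw
    obtain ⟨ε, hε0, hball⟩ := Metric.isOpen_iff.1 hW w hw
    refine ⟨ε, hε0, fun p hp => ?_⟩
    refine const_of_hasFDerivAt_zero (g := fun p => ψ₁ p - ψ₂ p) (convex_ball _ _) isOpen_ball
      (fun q hq => ?_) hp (mem_ball_self hε0)
    have := ((h1 q (hball hq)).sub (h2 q (hball hq)))
    rwa [sub_self] at this
  haveI : PreconnectedSpace S := Subtype.preconnectedSpace hS
  have hG : IsLocallyConstant (fun p : S => ψ₁ (p : ℝ × ℝ) - ψ₂ (p : ℝ × ℝ)) := by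
    rw [IsLocallyConstant.iff_eventually_eq]
    intro x
    obtain ⟨ε, hε0, hconst⟩ := loc (↑x) (hSW x.2)
    have hmem : Subtype.val ⁻¹' (ball (↑x : ℝ × ℝ) ε) ∈ nhds x :=
      (continuous_subtype_val.continuousAt).preimage_mem_nhds
        (isOpen_ball.mem_nhds (mem_ball_self hε0))
    filter_upwards [hmem] with y hy
    exact hconst _ hy
  exact hG.apply_eq_of_preconnectedSpace ⟨a, ha⟩ ⟨b, hb⟩

/-! ### Continuation along paths -/

variable (u v) in
/-- `f` is a continuation of local primitives along the curve `γ`. -/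
def IsCont (Ω : Set (ℝ × ℝ)) (γ : unitInterval → ℝ × ℝ) (f : unitInterval → ℝ) : Prop :=
  ∀ t : unitInterval, ∃ (W : Set (ℝ × ℝ)) (ψ : ℝ × ℝ → ℝ),
    IsOpen W ∧ W ⊆ Ω ∧ IsPrim u v ψ W ∧ γ t ∈ W ∧
    ∀ᶠ s in nhds t, γ s ∈ W ∧ f s = ψ (γ s)

lemma isCont_sub_const {Ω : Set (ℝ × ℝ)} {γ : unitInterval → ℝ × ℝ} {f₁ f₂ : unitInterval → ℝ}
    (hγ : Continuous γ) (h1 : IsCont u v Ω γ f₁) (h2 : IsCont u v Ω γ f₂)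
    (s t : unitInterval) : f₁ s - f₂ s = f₁ t - f₂ t := by
  have key : IsLocallyConstant (fun t => f₁ t - f₂ t) := by
    rw [IsLocallyConstant.iff_eventually_eq]
    intro t
    obtain ⟨W₁, ψ₁, hW₁o, hW₁Ω, hp₁, hm₁, hev₁⟩ := h1 t
    obtain ⟨W₂, ψ₂, hW₂o, hW₂Ω, hp₂, hm₂, hev₂⟩ := h2 t
    obtain ⟨ε, hε0, hball⟩ := Metric.isOpen_iff.1 (hW₁o.inter hW₂o) _ ⟨hm₁, hm₂⟩
    have hγball : ∀ᶠ s in nhds t, γ s ∈ ball (γ t) ε :=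
      hγ.continuousAt.preimage_mem_nhds (isOpen_ball.mem_nhds (mem_ball_self hε0))
    filter_upwards [hev₁, hev₂, hγball] with s ⟨hsW₁, hsf₁⟩ ⟨hsW₂, hsf₂⟩ hsball
    rw [hsf₁, hsf₂]
    have hf₁t : f₁ t = ψ₁ (γ t) := (hev₁.self_of_nhds).2
    have hf₂t : f₂ t = ψ₂ (γ t) := (hev₂.self_of_nhds).2
    rw [hf₁t, hf₂t]
    exact prim_sub_const (hW₁o.inter hW₂o)
      (hp₁.mono inter_subset_left) (hp₂.mono inter_subset_right)
      ((convex_ball _ _).isPreconnected) hball hsball (mem_ball_self hε0)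
  exact key.apply_eq_of_preconnectedSpace s t

variable (u v) in
/-- The variation of the (multivalued) primitive along a curve. -/
noncomputable def vari (Ω : Set (ℝ × ℝ)) (γ : unitInterval → ℝ × ℝ) : ℝ :=
  haveI := Classical.propDecidable (∃ f, IsCont u v Ω γ f)
  if h : ∃ f, IsCont u v Ω γ f then h.choose 1 - h.choose 0 else 0

lemma vari_eq {Ω : Set (ℝ × ℝ)} {γ : unitInterval → ℝ × ℝ} {f : unitInterval → ℝ}
    (hγ : Continuous γ) (hf : IsCont u v Ω γ f) : vari u v Ω γ = f 1 - f 0 := by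
  have hex : ∃ f, IsCont u v Ω γ f := ⟨f, hf⟩
  have heq : vari u v Ω γ = hex.choose 1 - hex.choose 0 := by
    rw [vari]
    exact dif_pos hex
  rw [heq]
  have := isCont_sub_const hγ (Exists.choose_spec hex) hf 1 0
  linarith

/-! ### Chains of primitives along a subdivided curve -/

/-- The `j`-th junction point of a subdivision into `n` pieces. -/
def pt (n j : ℕ) : unitInterval := Set.projIcc 0 1 zero_le_one ((j : ℝ) / (n : ℝ))

lemma pt_coe {n j : ℕ} (h : (j:ℝ)/(n:ℝ) ∈ Icc (0:ℝ) 1) : (pt n j : ℝ) = (j:ℝ)/(n:ℝ) := by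
  rw [pt, Set.projIcc_of_mem _ h]

lemma chain_isCont {Ω : Set (ℝ × ℝ)} {γ : unitInterval → ℝ × ℝ} (hγ : Continuous γ)
    {n : ℕ} (hn : 0 < n) {W : ℕ → Set (ℝ × ℝ)} {ψ : ℕ → ℝ × ℝ → ℝ} {c : ℕ → ℝ}
    (hWo : ∀ i, i < n → IsOpen (W i)) (hWΩ : ∀ i, i < n → W i ⊆ Ω)
    (hprim : ∀ i, i < n → IsPrim u v (ψ i) (W i))
    (hcover : ∀ i, i < n → ∀ t : unitInterval,
      (t:ℝ) ∈ Icc ((i:ℝ)/(n:ℝ)) (((i:ℝ)+1)/(n:ℝ)) → γ t ∈ W i)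
    (hc : ∀ i, i + 1 < n →
      c (i+1) = c i + ψ i (γ (pt n (i+1))) - ψ (i+1) (γ (pt n (i+1)))) :
    ∃ f, IsCont u v Ω γ f ∧ f 0 = ψ 0 (γ 0) + c 0 ∧ f 1 = ψ (n-1) (γ 1) + c (n-1) := by
  have hn' : (0:ℝ) < (n:ℝ) := Nat.cast_pos.2 hn
  set idx : unitInterval → ℕ := fun s => min ⌊(n:ℝ) * (s:ℝ)⌋₊ (n-1) with hidxdef
  have hidxlt : ∀ s, idx s < n := fun s => lt_of_le_of_lt (min_le_right _ _) (by omega)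
  have hidxle : ∀ s, idx s ≤ n - 1 := fun s => min_le_right _ _
  have hmemIcc : ∀ s : unitInterval, (s:ℝ) ∈ Icc ((idx s : ℝ)/(n:ℝ)) (((idx s:ℝ)+1)/(n:ℝ)) := by
    intro s
    have h0 : (0:ℝ) ≤ (n:ℝ)*(s:ℝ) := mul_nonneg hn'.le s.2.1
    rcases le_or_gt ⌊(n:ℝ)*(s:ℝ)⌋₊ (n-1) with h | h
    · have hidx : idx s = ⌊(n:ℝ)*(s:ℝ)⌋₊ := min_eq_left h
      constructor
      · rw [hidx, div_le_iff₀ hn']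
        have := Nat.floor_le h0
        nlinarith [mul_comm (s:ℝ) (n:ℝ)]
      · rw [hidx, le_div_iff₀ hn']
        have := Nat.lt_floor_add_one ((n:ℝ)*(s:ℝ))
        nlinarith [mul_comm (s:ℝ) (n:ℝ)]
    · have hidx : idx s = n-1 := min_eq_right h.le
      have hge : (n:ℝ) ≤ (⌊(n:ℝ)*(s:ℝ)⌋₊ : ℝ) := by
        have : n ≤ ⌊(n:ℝ)*(s:ℝ)⌋₊ := by omega
        exact_mod_cast this
      have h1 : (n:ℝ) ≤ (n:ℝ)*(s:ℝ) := hge.trans (Nat.floor_le h0)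
      have hs1 : (s:ℝ) = 1 := le_antisymm s.2.2 (by nlinarith)
      have hcast : ((n-1 : ℕ):ℝ) = (n:ℝ) - 1 := by
        rw [Nat.cast_sub hn]; simp
      rw [hidx, hcast, hs1]
      have hne : (n:ℝ) - 1 + 1 = (n:ℝ) := by ring
      constructor
      · rw [div_le_one hn']; linarith
      · rw [hne, div_self hn'.ne']
  have hWmem : ∀ s, γ s ∈ W (idx s) := fun s => hcover _ (hidxlt s) s (hmemIcc s)
  have hcont : Continuous fun s : unitInterval => (n:ℝ)*(s:ℝ) :=
    continuous_const.mul continuous_subtype_val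
  have hidx0 : idx 0 = 0 := by
    simp [hidxdef]
  have hidx1 : idx 1 = n - 1 := by
    have : ((1:unitInterval):ℝ) = 1 := rfl
    simp [hidxdef, this]
  refine ⟨fun s => ψ (idx s) (γ s) + c (idx s), ?_, by simp only; rw [hidx0], by simp only; rw [hidx1]⟩
  intro t
  set k := idx t with hkdef
  have hklt : k < n := hidxlt t
  have hkle : k ≤ n - 1 := hidxle t
  have hIcc := hmemIcc t
  have hx1 : (k:ℝ) ≤ (n:ℝ)*(t:ℝ) := by
    have := (div_le_iff₀ hn').1 hIcc.1
    nlinarith [mul_comm (t:ℝ) (n:ℝ)]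
  have hx2 : (n:ℝ)*(t:ℝ) ≤ (k:ℝ)+1 := by
    have := (le_div_iff₀ hn').1 hIcc.2
    nlinarith [mul_comm (t:ℝ) (n:ℝ)]
  -- the easy case: eventually `idx s = k`
  have easy : (∀ᶠ s in nhds t, idx s = k) →
      ∃ (Wi : Set (ℝ × ℝ)) (ψi : ℝ × ℝ → ℝ), IsOpen Wi ∧ Wi ⊆ Ω ∧ IsPrim u v ψi Wi ∧
        γ t ∈ Wi ∧ ∀ᶠ s in nhds t, γ s ∈ Wi ∧
          (fun s => ψ (idx s) (γ s) + c (idx s)) s = ψi (γ s) := by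
    intro hev
    refine ⟨W k, fun z => ψ k z + c k, hWo k hklt, hWΩ k hklt, (hprim k hklt).add_const _,
      hkdef ▸ hWmem t, ?_⟩
    filter_upwards [hev] with s hs
    constructor
    · have := hWmem s; rwa [hs] at this
    · simp only [hs]
  rcases eq_or_lt_of_le hx2 with heq | hlt2
  · -- top case : n*t = k+1 exactly
    apply easy
    have hfl : ⌊(n:ℝ)*(t:ℝ)⌋₊ = k+1 := by
      rw [show (n:ℝ)*(t:ℝ) = ((k+1:ℕ):ℝ) by push_cast; linarith]
      exact Nat.floor_natCast _
    have hkn : k = n - 1 := by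
      have hkmin : k = min ⌊(n:ℝ)*(t:ℝ)⌋₊ (n-1) := hkdef
      rw [hfl] at hkmin
      omega
    have hnn : ((n:ℕ):ℝ) - 1 < (n:ℝ)*(t:ℝ) := by
      have hkn' : ((k:ℝ)+1) = (n:ℝ) := by
        rw [hkn, Nat.cast_sub hn]; push_cast; ring
      rw [heq, hkn']; linarith
    have hevset : {s : unitInterval | (n:ℝ) - 1 < (n:ℝ)*(s:ℝ)} ∈ nhds t :=
      (isOpen_lt continuous_const hcont).mem_nhds hnn
    filter_upwards [hevset] with s hs
    have hfl2 : n - 1 ≤ ⌊(n:ℝ)*(s:ℝ)⌋₊ := by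
      rw [Nat.le_floor_iff (mul_nonneg hn'.le s.2.1), Nat.cast_sub hn]
      push_cast
      exact le_of_lt hs
    show min ⌊(n:ℝ)*(s:ℝ)⌋₊ (n-1) = k
    omega
  · rcases eq_or_lt_of_le hx1 with heq0 | hlt1
    · by_cases hk0 : k = 0
      · -- t at the very start of interval 0
        apply easy
        have hevset : {s : unitInterval | (n:ℝ)*(s:ℝ) < (k:ℝ)+1} ∈ nhds t :=
          (isOpen_lt hcont continuous_const).mem_nhds hlt2
        filter_upwards [hevset] with s hs
        have hfl : ⌊(n:ℝ)*(s:ℝ)⌋₊ = 0 := by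
          rw [Nat.floor_eq_zero]
          rw [hk0] at hs
          simpa using hs
        show min ⌊(n:ℝ)*(s:ℝ)⌋₊ (n-1) = k
        omega
      · -- junction case
        obtain ⟨m, hm⟩ : ∃ m, k = m + 1 := ⟨k - 1, by omega⟩
        have hmlt : m < n := by omega
        have ht : (t:ℝ) = (k:ℝ)/(n:ℝ) := by
          rw [eq_div_iff hn'.ne']
          nlinarith [mul_comm (t:ℝ) (n:ℝ)]
        have hγtm : γ t ∈ W m := by
          refine hcover m hmlt t ⟨?_, ?_⟩
          · rw [ht]
            gcongr
            exact_mod_cast (by omega : m ≤ k)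
          · rw [ht, hm]
            push_cast
            exact le_refl _
        have hγtk : γ t ∈ W k := hkdef ▸ hWmem t
        have hptk : pt n k = t := by
          have hmem' : (k:ℝ)/(n:ℝ) ∈ Icc (0:ℝ) 1 := by
            constructor
            · positivity
            · rw [div_le_one hn']
              exact_mod_cast hklt.le
          apply Subtype.ext
          rw [pt_coe hmem', ht]
        have hceq : c k = c m + ψ m (γ t) - ψ k (γ t) := by
          have h := hc m (by omega)
          rw [← hm, hptk] at h
          exact h
        obtain ⟨ε, hε0, hball⟩ := Metric.isOpen_iff.1 ((hWo m hmlt).inter (hWo k hklt)) (γ t)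
          ⟨hγtm, hγtk⟩
        have hconst : ∀ zz ∈ ball (γ t) ε, ψ m zz + c m = ψ k zz + c k := by
          intro zz hzz
          have := prim_sub_const ((hWo m hmlt).inter (hWo k hklt))
            ((hprim m hmlt).mono inter_subset_left) ((hprim k hklt).mono inter_subset_right)
            ((convex_ball _ _).isPreconnected) hball hzz (mem_ball_self hε0)
          linarith [hceq]
        refine ⟨ball (γ t) ε, fun z => ψ k z + c k, isOpen_ball,
          hball.trans (inter_subset_right.trans (hWΩ k hklt)),
          ((hprim k hklt).add_const _).mono (hball.trans inter_subset_right),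
          mem_ball_self hε0, ?_⟩
        have hγball : ∀ᶠ s in nhds t, γ s ∈ ball (γ t) ε :=
          hγ.continuousAt.preimage_mem_nhds (isOpen_ball.mem_nhds (mem_ball_self hε0))
        have hwin : {s : unitInterval |
            (k:ℝ) - 1/2 < (n:ℝ)*(s:ℝ) ∧ (n:ℝ)*(s:ℝ) < (k:ℝ)+1/2} ∈ nhds t := by
          refine (((isOpen_lt continuous_const hcont).inter
            (isOpen_lt hcont continuous_const))).mem_nhds ⟨?_, ?_⟩
          · show (k:ℝ) - 1/2 < (n:ℝ)*(t:ℝ)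
            linarith
          · show (n:ℝ)*(t:ℝ) < (k:ℝ)+1/2
            linarith
        filter_upwards [hγball, hwin] with s hs1 hs2
        refine ⟨hs1, ?_⟩
        have hns0 : 0 ≤ (n:ℝ)*(s:ℝ) := mul_nonneg hn'.le s.2.1
        have hfl_le : ⌊(n:ℝ)*(s:ℝ)⌋₊ ≤ k := by
          have hlt' : (n:ℝ)*(s:ℝ) < ((k+1 : ℕ):ℝ) := by push_cast; linarith [hs2.2]
          have := (Nat.floor_lt hns0).2 hlt'
          omega
        have hfl_ge : m ≤ ⌊(n:ℝ)*(s:ℝ)⌋₊ := by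
          rw [Nat.le_floor_iff hns0]
          have hcm : (m:ℝ) = (k:ℝ) - 1 := by rw [hm]; push_cast; ring
          linarith [hs2.1]
        have hidxs : idx s = m ∨ idx s = k := by
          show min ⌊(n:ℝ)*(s:ℝ)⌋₊ (n-1) = m ∨ min ⌊(n:ℝ)*(s:ℝ)⌋₊ (n-1) = k
          omega
        rcases hidxs with h | h
        · simp only [h]
          exact hconst _ hs1
        · simp only [h]
    · -- interior case
      apply easy
      have hevset : {s : unitInterval |
          (k:ℝ) < (n:ℝ)*(s:ℝ) ∧ (n:ℝ)*(s:ℝ) < (k:ℝ)+1} ∈ nhds t :=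
        ((isOpen_lt continuous_const hcont).inter
          (isOpen_lt hcont continuous_const)).mem_nhds ⟨hlt1, hlt2⟩
      filter_upwards [hevset] with s hs
      have hfl : ⌊(n:ℝ)*(s:ℝ)⌋₊ = k := by
        rw [Nat.floor_eq_iff (mul_nonneg hn'.le s.2.1)]
        exact ⟨hs.1.le, by push_cast; exact hs.2⟩
      show min ⌊(n:ℝ)*(s:ℝ)⌋₊ (n-1) = k
      omega

/-! ### Existence of chains: Lebesgue number argument -/

lemma pt_coe' {n j : ℕ} (hn : 0 < n) (hj : j ≤ n) : (pt n j : ℝ) = (j:ℝ)/(n:ℝ) := by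
  have hn' : (0:ℝ) < (n:ℝ) := Nat.cast_pos.2 hn
  refine pt_coe ⟨by positivity, ?_⟩
  rw [div_le_one hn']
  exact_mod_cast hj

lemma exists_tube {Ω : Set (ℝ × ℝ)}
    (hloc : ∀ z ∈ Ω, ∃ r > 0, ball z r ⊆ Ω ∧ ∃ ψ, IsPrim u v ψ (ball z r))
    {H : unitInterval × unitInterval → ℝ × ℝ} (hH : Continuous H) (hrange : ∀ p, H p ∈ Ω)
    (s₀ : unitInterval) :
    ∃ δ > 0, ∃ n : ℕ, 0 < n ∧ ∃ (W : ℕ → Set (ℝ × ℝ)) (ψ : ℕ → ℝ × ℝ → ℝ),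
      (∀ i, i < n → IsOpen (W i)) ∧ (∀ i, i < n → W i ⊆ Ω) ∧
      (∀ i, i < n → IsPrim u v (ψ i) (W i)) ∧
      (∀ i, i < n → ∀ s : unitInterval, dist s s₀ < δ → ∀ t : unitInterval,
        (t:ℝ) ∈ Icc ((i:ℝ)/(n:ℝ)) (((i:ℝ)+1)/(n:ℝ)) → H (s, t) ∈ W i) := by
  -- choose a ball with a primitive around each image point
  choose r hr0 hrΩ ψloc hψloc using fun p => hloc (H p) (hrange p)
  -- Lebesgue number for the cover by preimages of these balls
  obtain ⟨δL, hδL0, hleb⟩ := lebesgue_number_lemma_of_metric (isCompact_univ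
      (X := unitInterval × unitInterval))
    (fun p => (isOpen_ball).preimage hH) (fun p _ => Set.mem_iUnion.2 ⟨p, mem_ball_self (hr0 p)⟩)
  -- choose n with 1/n < δL/2
  obtain ⟨n, hnbig⟩ := exists_nat_gt (2/δL)
  have hn : 0 < n := by
    have h2 : (0:ℝ) < 2/δL := by positivity
    have : (0:ℝ) < (n:ℝ) := lt_trans h2 hnbig
    exact_mod_cast this
  have hn' : (0:ℝ) < (n:ℝ) := Nat.cast_pos.2 hn
  have h2' : 2 < (n:ℝ)*δL := by
    have := (div_lt_iff₀ hδL0).1 hnbig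
    nlinarith
  have hinv : 1/(n:ℝ) < δL/2 := by
    rw [div_lt_div_iff₀ hn' (by norm_num : (0:ℝ) < 2)]
    nlinarith
  refine ⟨δL/2, by positivity, n, hn, ?_⟩
  have hch : ∀ i, ∃ (Wi : Set (ℝ × ℝ)) (ψi : ℝ × ℝ → ℝ),
      IsOpen Wi ∧ Wi ⊆ Ω ∧ IsPrim u v ψi Wi ∧
      (i < n → ∀ s : unitInterval, dist s s₀ < δL/2 → ∀ t : unitInterval,
        (t:ℝ) ∈ Icc ((i:ℝ)/(n:ℝ)) (((i:ℝ)+1)/(n:ℝ)) → H (s, t) ∈ Wi) := by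
    intro i
    by_cases hi : i < n
    · obtain ⟨p, hp⟩ := hleb (s₀, pt n i) trivial
      refine ⟨ball (H p) (r p), ψloc p, isOpen_ball, hrΩ p, hψloc p, fun _ s hs t ht => ?_⟩
      apply hp
      rw [mem_ball, Prod.dist_eq]
      have hd2 : dist t (pt n i) < δL/2 := by
        rw [Subtype.dist_eq, Real.dist_eq, pt_coe' hn hi.le]
        have h1 : (i:ℝ)/(n:ℝ) ≤ (t:ℝ) := ht.1
        have h2 : (t:ℝ) ≤ ((i:ℝ)+1)/(n:ℝ) := ht.2
        have h3 : ((i:ℝ)+1)/(n:ℝ) - (i:ℝ)/(n:ℝ) = 1/(n:ℝ) := by ring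
        rw [abs_sub_lt_iff]
        constructor <;> nlinarith
      exact max_lt (by linarith) (by linarith)
    · exact ⟨∅, 0, isOpen_empty, empty_subset _, fun z hz => absurd hz (notMem_empty z),
        fun h => absurd h hi⟩
  choose W ψ h1 h2 h3 h4 using hch
  exact ⟨W, ψ, fun i _ => h1 i, fun i _ => h2 i, fun i _ => h3 i, fun i hi => h4 i hi⟩

lemma exists_isCont {Ω : Set (ℝ × ℝ)}
    (hloc : ∀ z ∈ Ω, ∃ r > 0, ball z r ⊆ Ω ∧ ∃ ψ, IsPrim u v ψ (ball z r))
    {γ : unitInterval → ℝ × ℝ} (hγ : Continuous γ) (hγΩ : ∀ t, γ t ∈ Ω) :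
    ∃ f, IsCont u v Ω γ f := by
  obtain ⟨δ, hδ0, n, hn, W, ψ, hWo, hWΩ, hprim, hcover⟩ :=
    exists_tube hloc (H := fun p => γ p.2) (hH := hγ.comp continuous_snd)
      (fun p => hγΩ p.2) 0
  set c : ℕ → ℝ := fun i => Nat.rec 0
    (fun i ci => ci + ψ i (γ (pt n (i+1))) - ψ (i+1) (γ (pt n (i+1)))) i with hcdef
  obtain ⟨f, hf, -, -⟩ := chain_isCont (c := c) hγ hn hWo hWΩ hprim
    (fun i hi t ht => hcover i hi 0 (by simpa using hδ0) t ht)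
    (fun i hi => rfl)
  exact ⟨f, hf⟩

/-! ### Homotopy invariance -/

lemma uIcc_abs_le {a b w : ℝ} (hw : w ∈ uIcc a b) : |w - b| ≤ |a - b| := by
  rcases Set.mem_uIcc.1 hw with ⟨h1, h2⟩ | ⟨h1, h2⟩
  · rw [abs_of_nonpos (by linarith)]
    have := neg_abs_le (a - b); linarith
  · rw [abs_of_nonneg (by linarith)]
    have := le_abs_self (a - b); linarith

lemma projIcc_unit (s : unitInterval) : Set.projIcc (0:ℝ) 1 zero_le_one (s:ℝ) = s := by
  apply Subtype.ext
  rw [Set.projIcc_of_mem _ s.2]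

lemma vari_homotopy {Ω : Set (ℝ × ℝ)}
    (hloc : ∀ z ∈ Ω, ∃ r > 0, ball z r ⊆ Ω ∧ ∃ ψ, IsPrim u v ψ (ball z r))
    {H : unitInterval × unitInterval → ℝ × ℝ} (hH : Continuous H) (hrange : ∀ p, H p ∈ Ω)
    (hend0 : ∀ s, H (s, 0) = H (0, 0)) (hend1 : ∀ s, H (s, 1) = H (0, 1)) :
    vari u v Ω (fun t => H (0, t)) = vari u v Ω (fun t => H (1, t)) := by
  set g : unitInterval → ℝ := fun s => vari u v Ω (fun t => H (s, t)) with hg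
  have key : IsLocallyConstant g := by
    rw [IsLocallyConstant.iff_eventually_eq]
    intro s₀
    obtain ⟨δ, hδ0, n, hn, W, ψ, hWo, hWΩ, hprim, hcover⟩ := exists_tube hloc hH hrange s₀
    have hn' : (0:ℝ) < (n:ℝ) := Nat.cast_pos.2 hn
    set c : unitInterval → ℕ → ℝ := fun s i => Nat.rec 0
      (fun i ci => ci + ψ i (H (s, pt n (i+1))) - ψ (i+1) (H (s, pt n (i+1)))) i with hcdef
    have hc0 : ∀ s, c s 0 = 0 := fun s => rfl
    have hval : ∀ s, dist s s₀ < δ →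
        g s = ψ (n-1) (H (s, 1)) + c s (n-1) - ψ 0 (H (s, 0)) := by
      intro s hs
      have hγs : Continuous fun t : unitInterval => H (s, t) := by
        exact hH.comp (Continuous.prodMk_right s)
      obtain ⟨f, hf, hf0, hf1⟩ := chain_isCont (γ := fun t => H (s, t)) (c := c s)
        hγs hn hWo hWΩ hprim
        (fun i hi t ht => hcover i hi s hs t ht) (fun i hi => rfl)
      rw [hg]
      simp only
      rw [vari_eq hγs hf, hf1, hf0, hc0]
      ring
    have hconst : ∀ s, dist s s₀ < δ → ∀ i, i < n → c s i = c s₀ i := by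
      intro s hs i hi
      induction i with
      | zero => rfl
      | succ i ih =>
        have hi' : i < n := by omega
        have hih := ih hi'
        have hpt1 : ((pt n (i+1) : ℝ)) = ((i:ℝ)+1)/(n:ℝ) := by
          rw [pt_coe' hn (by omega)]; push_cast; ring
        have hptIcc1 : ((pt n (i+1) : ℝ)) ∈ Icc ((i:ℝ)/(n:ℝ)) (((i:ℝ)+1)/(n:ℝ)) := by
          rw [hpt1]
          exact ⟨by gcongr; linarith, le_refl _⟩
        have hptIcc2 : ((pt n (i+1) : ℝ)) ∈
            Icc (((i+1:ℕ):ℝ)/(n:ℝ)) ((((i+1:ℕ):ℝ)+1)/(n:ℝ)) := by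
          rw [hpt1]
          push_cast
          exact ⟨le_refl _, by gcongr; linarith⟩
        have hstep : ψ i (H (s, pt n (i+1))) - ψ (i+1) (H (s, pt n (i+1)))
            = ψ i (H (s₀, pt n (i+1))) - ψ (i+1) (H (s₀, pt n (i+1))) := by
          set φ : ℝ → ℝ × ℝ :=
            fun w => H (Set.projIcc (0:ℝ) 1 zero_le_one w, pt n (i+1)) with hφ
          have hφc : Continuous φ :=
            hH.comp ((continuous_projIcc).prodMk continuous_const)
          have hMpre : IsPreconnected (φ '' (uIcc (s:ℝ) (s₀:ℝ))) :=
            isPreconnected_uIcc.image _ hφc.continuousOn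
          have hMsub : φ '' (uIcc (s:ℝ) (s₀:ℝ)) ⊆ W i ∩ W (i+1) := by
            rintro _ ⟨w, hw, rfl⟩
            have hw01 : w ∈ Icc (0:ℝ) 1 := by
              rcases Set.mem_uIcc.1 hw with ⟨ha, hb⟩ | ⟨ha, hb⟩ <;>
                exact ⟨by linarith [s.2.1, s₀.2.1], by linarith [s.2.2, s₀.2.2]⟩
            have hproj : (Set.projIcc (0:ℝ) 1 zero_le_one w : ℝ) = w := by
              rw [Set.projIcc_of_mem _ hw01]
            have hdist : dist (Set.projIcc (0:ℝ) 1 zero_le_one w) s₀ < δ := by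
              rw [Subtype.dist_eq, hproj, Real.dist_eq]
              have h1 := uIcc_abs_le hw
              have h2 : dist s s₀ = |(s:ℝ) - (s₀:ℝ)| := by
                rw [Subtype.dist_eq, Real.dist_eq]
              linarith
            exact ⟨hcover i hi' _ hdist _ hptIcc1, hcover (i+1) hi _ hdist _ hptIcc2⟩
          have hsM : H (s, pt n (i+1)) ∈ φ '' (uIcc (s:ℝ) (s₀:ℝ)) := by
            refine ⟨(s:ℝ), left_mem_uIcc, ?_⟩
            rw [hφ]
            simp only
            rw [projIcc_unit]
          have hs₀M : H (s₀, pt n (i+1)) ∈ φ '' (uIcc (s:ℝ) (s₀:ℝ)) := by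
            refine ⟨(s₀:ℝ), right_mem_uIcc, ?_⟩
            rw [hφ]
            simp only
            rw [projIcc_unit]
          have := prim_sub_const ((hWo i hi').inter (hWo (i+1) hi))
            ((hprim i hi').mono inter_subset_left) ((hprim (i+1) hi).mono inter_subset_right)
            hMpre hMsub hsM hs₀M
          linarith
        show c s i + ψ i (H (s, pt n (i+1))) - ψ (i+1) (H (s, pt n (i+1)))
            = c s₀ i + ψ i (H (s₀, pt n (i+1))) - ψ (i+1) (H (s₀, pt n (i+1)))
        rw [hih]
        linarith
    rw [Metric.eventually_nhds_iff_ball]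
    refine ⟨δ, hδ0, fun s hs => ?_⟩
    rw [mem_ball] at hs
    rw [hval s hs, hval s₀ (by simpa using hδ0), hend0 s, hend1 s,
      hend0 s₀, hend1 s₀, hconst s hs (n-1) (by omega)]
  exact key.apply_eq_of_preconnectedSpace 0 1

lemma vari_homotopic {Ω : Set (ℝ × ℝ)}
    (hloc : ∀ z ∈ Ω, ∃ r > 0, ball z r ⊆ Ω ∧ ∃ ψ, IsPrim u v ψ (ball z r))
    {a b : Ω} {p q : Path a b} (h : p.Homotopic q) :
    vari u v Ω (fun t => (p t : ℝ × ℝ)) = vari u v Ω (fun t => (q t : ℝ × ℝ)) := by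
  obtain ⟨P⟩ := h
  have h0 : (fun t => ((P (0, t) : Ω) : ℝ × ℝ)) = fun t => (p t : ℝ × ℝ) :=
    funext fun t => by rw [P.apply_zero]; rfl
  have h1 : (fun t => ((P (1, t) : Ω) : ℝ × ℝ)) = fun t => (q t : ℝ × ℝ) :=
    funext fun t => by rw [P.apply_one]; rfl
  have hend0 : ∀ s : unitInterval, ((P (s, 0) : Ω) : ℝ × ℝ) = ((P (0, 0) : Ω) : ℝ × ℝ) := by
    intro s
    rw [P.eq_fst s (Set.mem_insert _ _), P.eq_fst 0 (Set.mem_insert _ _)]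
  have hend1 : ∀ s : unitInterval, ((P (s, 1) : Ω) : ℝ × ℝ) = ((P (0, 1) : Ω) : ℝ × ℝ) := by
    intro s
    rw [P.eq_fst s (Set.mem_insert_of_mem _ rfl), P.eq_fst 0 (Set.mem_insert_of_mem _ rfl)]
  have := vari_homotopy hloc (H := fun pr => ((P pr : Ω) : ℝ × ℝ))
    (continuous_subtype_val.comp P.continuous) (fun pr => (P pr).2) hend0 hend1
  rw [h0, h1] at this
  exact this

/-! ### Concatenation with a path inside a primitive domain -/

lemma vari_trans_prim {Ω : Set (ℝ × ℝ)} {a b d : Ω} (p : Path a b) (q : Path b d)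
    {W₀ : Set (ℝ × ℝ)} (hW₀o : IsOpen W₀) (hW₀Ω : W₀ ⊆ Ω) {ψ₀ : ℝ × ℝ → ℝ}
    (hprim₀ : IsPrim u v ψ₀ W₀) (hq : ∀ t, (q t : ℝ × ℝ) ∈ W₀)
    {f₀ : unitInterval → ℝ} (hf₀ : IsCont u v Ω (fun t => (p t : ℝ × ℝ)) f₀) :
    vari u v Ω (fun t => ((p.trans q) t : ℝ × ℝ))
      = (f₀ 1 - f₀ 0) + (ψ₀ (d : ℝ × ℝ) - ψ₀ (b : ℝ × ℝ)) := by
  classical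
  set dbl : unitInterval → unitInterval :=
    fun t => Set.projIcc (0:ℝ) 1 zero_le_one (2*(t:ℝ)) with hdbldef
  set hlv : unitInterval → unitInterval :=
    fun t => Set.projIcc (0:ℝ) 1 zero_le_one (2*(t:ℝ)-1) with hhlvdef
  have hdblc : Continuous dbl :=
    continuous_projIcc.comp (continuous_const.mul continuous_subtype_val)
  set γ : unitInterval → ℝ × ℝ := fun t => ((p.trans q) t : ℝ × ℝ) with hγdef
  have hγc : Continuous γ := continuous_subtype_val.comp (p.trans q).continuous
  have htrans_le : ∀ t : unitInterval, (t:ℝ) ≤ 1/2 → (p.trans q) t = p (dbl t) := by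
    intro t ht
    rw [Path.trans_apply, dif_pos ht]
    congr 1
    apply Subtype.ext
    rw [hdbldef]
    simp only
    rw [Set.projIcc_of_mem _ ⟨by nlinarith [t.2.1], by nlinarith⟩]
  have htrans_gt : ∀ t : unitInterval, ¬((t:ℝ) ≤ 1/2) → (p.trans q) t = q (hlv t) := by
    intro t ht
    rw [Path.trans_apply, dif_neg ht]
    congr 1
    apply Subtype.ext
    rw [hhlvdef]
    simp only
    rw [Set.projIcc_of_mem _ ⟨by push_neg at ht; nlinarith, by nlinarith [t.2.2]⟩]
  set f : unitInterval → ℝ :=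
    fun t => if (t:ℝ) ≤ 1/2 then f₀ (dbl t) else ψ₀ (γ t) + (f₀ 1 - ψ₀ (b : ℝ × ℝ)) with hfdef
  have hIsCont : IsCont u v Ω γ f := by
    intro t₀
    rcases lt_trichotomy ((t₀:ℝ)) (1/2) with hlt | heq | hgt
    · obtain ⟨W, ψ, hWo, hWΩ, hprimW, hmem, hev⟩ := hf₀ (dbl t₀)
      refine ⟨W, ψ, hWo, hWΩ, hprimW, ?_, ?_⟩
      · show ((p.trans q) t₀ : ℝ × ℝ) ∈ W
        rw [htrans_le t₀ hlt.le]
        exact hmem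
      · have hevd := (hdblc.continuousAt (x := t₀)).eventually hev
        have hhalf : ∀ᶠ s : unitInterval in nhds t₀, (s:ℝ) < 1/2 :=
          (isOpen_lt continuous_subtype_val continuous_const).mem_nhds hlt
        filter_upwards [hevd, hhalf] with s hs1 hs2
        have hγs : γ s = ((p (dbl s)) : ℝ × ℝ) := by
          show ((p.trans q) s : ℝ × ℝ) = _
          rw [htrans_le s hs2.le]
        constructor
        · rw [hγs]; exact hs1.1
        · have hfs : f s = f₀ (dbl s) := if_pos hs2.le
          rw [hfs, hγs]
          exact hs1.2
    · -- junction
      obtain ⟨W, ψ, hWo, hWΩ, hprimW, hmem1, hev⟩ := hf₀ 1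
      have hdbl1 : dbl t₀ = 1 := by
        apply Subtype.ext
        rw [hdbldef]
        simp only
        rw [show 2*(t₀:ℝ) = 1 by rw [heq]; ring,
          Set.projIcc_of_mem _ (by norm_num : (1:ℝ) ∈ Icc (0:ℝ) 1)]
        rfl
      have hbW : ((b : Ω) : ℝ × ℝ) ∈ W := by
        have := hmem1
        simp only at this
        rwa [p.target] at this
      have hbW₀ : ((b : Ω) : ℝ × ℝ) ∈ W₀ := by
        have := hq 0
        rwa [q.source] at this
      obtain ⟨ε, hε0, hball⟩ := Metric.isOpen_iff.1 (hWo.inter hW₀o) _ ⟨hbW, hbW₀⟩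
      have hf₀1 : f₀ 1 = ψ ((p 1 : ℝ × ℝ)) := (hev.self_of_nhds).2
      have hψb : ψ ((b : Ω) : ℝ × ℝ) = f₀ 1 := by rw [hf₀1, p.target]
      have hkey : ∀ zz ∈ ball ((b : Ω) : ℝ × ℝ) ε,
          ψ zz = ψ₀ zz + (f₀ 1 - ψ₀ ((b : Ω) : ℝ × ℝ)) := by
        intro zz hzz
        have := prim_sub_const (hWo.inter hW₀o) (hprimW.mono inter_subset_left)
          (hprim₀.mono inter_subset_right) (convex_ball _ _).isPreconnected hball hzz
          (mem_ball_self hε0)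
        linarith
      have hγt₀ : γ t₀ = ((b : Ω) : ℝ × ℝ) := by
        show ((p.trans q) t₀ : ℝ × ℝ) = _
        rw [htrans_le t₀ heq.le, hdbl1, p.target]
      refine ⟨ball ((b : Ω) : ℝ × ℝ) ε, fun zz => ψ₀ zz + (f₀ 1 - ψ₀ ((b : Ω) : ℝ × ℝ)),
        isOpen_ball, hball.trans (inter_subset_right.trans hW₀Ω),
        (hprim₀.add_const _).mono (hball.trans inter_subset_right), ?_, ?_⟩
      · rw [hγt₀]; exact mem_ball_self hε0
      · have hγball : ∀ᶠ s in nhds t₀, γ s ∈ ball ((b : Ω) : ℝ × ℝ) ε := by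
          apply hγc.continuousAt.preimage_mem_nhds
          rw [hγt₀]
          exact isOpen_ball.mem_nhds (mem_ball_self hε0)
        have hT : Filter.Tendsto dbl (nhds t₀) (nhds 1) := by
          rw [← hdbl1]; exact hdblc.continuousAt
        filter_upwards [hγball, hT.eventually hev] with s hs1 hs2
        refine ⟨hs1, ?_⟩
        show f s = ψ₀ (γ s) + (f₀ 1 - ψ₀ ((b : Ω) : ℝ × ℝ))
        by_cases hs : (s:ℝ) ≤ 1/2
        · have hγs : γ s = ((p (dbl s)) : ℝ × ℝ) := by
            show ((p.trans q) s : ℝ × ℝ) = _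
            rw [htrans_le s hs]
          have hfs : f s = f₀ (dbl s) := if_pos hs
          rw [hfs, hs2.2, ← hγs, hkey _ hs1]
        · exact if_neg hs
    · refine ⟨W₀, fun zz => ψ₀ zz + (f₀ 1 - ψ₀ ((b : Ω) : ℝ × ℝ)), hW₀o, hW₀Ω,
        hprim₀.add_const _, ?_, ?_⟩
      · show ((p.trans q) t₀ : ℝ × ℝ) ∈ W₀
        rw [htrans_gt t₀ (by linarith)]
        exact hq _
      · have hhalf : ∀ᶠ s : unitInterval in nhds t₀, 1/2 < (s:ℝ) :=
          (isOpen_lt continuous_const continuous_subtype_val).mem_nhds hgt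
        filter_upwards [hhalf] with s hs
        constructor
        · show ((p.trans q) s : ℝ × ℝ) ∈ W₀
          rw [htrans_gt s (by linarith)]
          exact hq _
        · exact if_neg (by linarith)
  have hv := vari_eq hγc hIsCont
  have hf1 : f 1 = ψ₀ ((d : Ω) : ℝ × ℝ) + (f₀ 1 - ψ₀ ((b : Ω) : ℝ × ℝ)) := by
    have h1 : ¬(((1:unitInterval):ℝ) ≤ 1/2) := by norm_num
    rw [hfdef]
    simp only [if_neg h1]
    congr 1
    show ψ₀ ((p.trans q) 1 : ℝ × ℝ) = _
    rw [(p.trans q).target]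
  have hf0 : f 0 = f₀ 0 := by
    have h0 : ((0:unitInterval):ℝ) ≤ 1/2 := by norm_num
    have hdbl0 : dbl 0 = 0 := by
      apply Subtype.ext
      rw [hdbldef]
      simp only
      rw [show 2*((0:unitInterval):ℝ) = 0 by norm_num,
        Set.projIcc_of_mem _ (by norm_num : (0:ℝ) ∈ Icc (0:ℝ) 1)]
      rfl
    rw [hfdef]
    simp only [if_pos h0]
    rw [hdbl0]
  rw [hv, hf1, hf0]
  ring

end StreamAux

/-- An incompressible planar velocity field on an open, connected, simply connected
domain admits a stream function. -/
theorem exists_streamFunction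
    (Ω : Set (ℝ × ℝ)) (hΩ : IsOpen Ω) (hconn : IsConnected Ω)
    (hsc : SimplyConnectedSpace Ω)
    (u v : ℝ × ℝ → ℝ) (hu : ContDiffOn ℝ 1 u Ω) (hv : ContDiffOn ℝ 1 v Ω)
    (hinc : ∀ z ∈ Ω, pdx u z + pdy v z = 0) :
    ∃ ψ : ℝ × ℝ → ℝ, ContDiffOn ℝ 2 ψ Ω ∧
      ∀ z ∈ Ω, pdy ψ z = u z ∧ pdx ψ z = -v z := by
  classical
  haveI : SimplyConnectedSpace Ω := hsc
  have hinc' : ∀ z ∈ Ω, fderiv ℝ u z (1, 0) + fderiv ℝ v z (0, 1) = 0 := hinc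
  have hloc : ∀ z ∈ Ω, ∃ r > 0, ball z r ⊆ Ω ∧ ∃ ψ, IsPrim u v ψ (ball z r) :=
    fun z hz => exists_local_prim hΩ hu hv hinc' hz
  obtain ⟨z₀, hz₀⟩ := hconn.nonempty
  set a₀ : Ω := ⟨z₀, hz₀⟩ with ha₀
  set Ψ : ℝ × ℝ → ℝ := fun z =>
    if h : z ∈ Ω then
      vari u v Ω (fun t => ((PathConnectedSpace.somePath a₀ ⟨z, h⟩) t : ℝ × ℝ))
    else 0 with hΨdef
  have hkey : ∀ z₁, ∀ hz₁ : z₁ ∈ Ω, ∃ r > 0, ball z₁ r ⊆ Ω ∧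
      ∃ ψ₀, IsPrim u v ψ₀ (ball z₁ r) ∧ ∀ z ∈ ball z₁ r, Ψ z = Ψ z₁ + ψ₀ z - ψ₀ z₁ := by
    intro z₁ hz₁
    obtain ⟨r, hr0, hrΩ, ψ₀, hψ₀⟩ := hloc z₁ hz₁
    refine ⟨r, hr0, hrΩ, ψ₀, hψ₀, ?_⟩
    intro z hz
    have hzΩ : z ∈ Ω := hrΩ hz
    have hseg : ∀ t : unitInterval, z₁ + (t:ℝ) • (z - z₁) ∈ ball z₁ r := by
      intro t
      rw [mem_ball, dist_eq_norm]
      have he : z₁ + (t:ℝ) • (z - z₁) - z₁ = (t:ℝ) • (z - z₁) := by abel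
      rw [he, norm_smul]
      have hzn : ‖z - z₁‖ < r := by
        rw [← dist_eq_norm]
        exact mem_ball.1 hz
      have ht1 : ‖(t:ℝ)‖ ≤ 1 := by
        rw [Real.norm_eq_abs, abs_of_nonneg t.2.1]
        exact t.2.2
      calc ‖(t:ℝ)‖ * ‖z - z₁‖ ≤ 1 * ‖z - z₁‖ :=
            mul_le_mul_of_nonneg_right ht1 (norm_nonneg _)
        _ = ‖z - z₁‖ := one_mul _
        _ < r := hzn
    set σ : Path (⟨z₁, hz₁⟩ : Ω) ⟨z, hzΩ⟩ :=
      { toFun := fun t => ⟨z₁ + (t:ℝ) • (z - z₁), hrΩ (hseg t)⟩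
        continuous_toFun := by
          apply Continuous.subtype_mk
          exact continuous_const.add (continuous_subtype_val.smul continuous_const)
        source' := by
          apply Subtype.ext
          simp
        target' := by
          apply Subtype.ext
          simp } with hσdef
    set pp := PathConnectedSpace.somePath a₀ (⟨z₁, hz₁⟩ : Ω) with hppdef
    have hγp : Continuous fun t => ((pp t : Ω) : ℝ × ℝ) :=
      continuous_subtype_val.comp pp.continuous
    obtain ⟨f₀, hf₀⟩ := exists_isCont hloc hγp (fun t => (pp t).2)
    have htrans := vari_trans_prim (Ω := Ω) pp σ isOpen_ball hrΩ hψ₀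
      (fun t => hseg t) hf₀
    have hhom : vari u v Ω (fun t => ((PathConnectedSpace.somePath a₀ ⟨z, hzΩ⟩) t : ℝ × ℝ))
        = vari u v Ω (fun t => ((pp.trans σ) t : ℝ × ℝ)) := by
      apply vari_homotopic hloc
      have hsub : Subsingleton (Path.Homotopic.Quotient a₀ (⟨z, hzΩ⟩ : Ω)) := inferInstance
      have heq := @Subsingleton.elim _ hsub
        (⟦PathConnectedSpace.somePath a₀ ⟨z, hzΩ⟩⟧ : Path.Homotopic.Quotient a₀ ⟨z, hzΩ⟩)
        ⟦pp.trans σ⟧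
      exact Quotient.exact heq
    rw [hΨdef]
    simp only
    rw [dif_pos hzΩ, dif_pos hz₁, hhom, htrans, vari_eq hγp hf₀]
    ring
  have hprimΨ : ∀ z₁ ∈ Ω, HasFDerivAt Ψ (lmap u v z₁) z₁ := by
    intro z₁ hz₁
    obtain ⟨r, hr0, hrΩ, ψ₀, hψ₀, hform⟩ := hkey z₁ hz₁
    have hbase : HasFDerivAt (fun z => Ψ z₁ + ψ₀ z - ψ₀ z₁) (lmap u v z₁) z₁ := by
      have h1 := (hψ₀ z₁ (mem_ball_self hr0)).const_add (Ψ z₁)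
      have h2 := h1.sub_const (ψ₀ z₁)
      exact h2
    apply hbase.congr_of_eventuallyEq
    filter_upwards [isOpen_ball.mem_nhds (mem_ball_self hr0)] with w hw
    exact hform w hw
  have hsmooth_lmap : ContDiffOn ℝ 1 (fun z => lmap u v z) Ω := by
    have h1 : ContDiffOn ℝ 1 (fun z => (-(v z)) • (ContinuousLinearMap.fst ℝ ℝ ℝ)
        + (u z) • (ContinuousLinearMap.snd ℝ ℝ ℝ)) Ω :=
      ((hv.neg).smul contDiffOn_const).add (hu.smul contDiffOn_const)
    exact h1.congr (fun z hz => rfl)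
  refine ⟨Ψ, ?_, ?_⟩
  · have h2 : (2 : WithTop ℕ∞) = 1 + 1 := by norm_num
    rw [h2, contDiffOn_succ_iff_fderiv_of_isOpen hΩ]
    refine ⟨fun z hz => ((hprimΨ z hz).differentiableAt).differentiableWithinAt,
      fun h => by simp at h, ?_⟩
    exact hsmooth_lmap.congr (fun z hz => (hprimΨ z hz).fderiv)
  · intro z hz
    have hfd := (hprimΨ z hz).fderiv
    constructor
    · show fderiv ℝ Ψ z (0, 1) = u z
      rw [hfd, lmap_apply]
      norm_num
    · show fderiv ℝ Ψ z (1, 0) = -v z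
      rw [hfd, lmap_apply]
      norm_num
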